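/- For every u ∈ ℝ, the series defining Φ(u) converges absolutely and Φ satisfies the functional equation Φ(−u) = Φ(u). -/

import Mathlib

set_option maxHeartbeats 1000000

open Real

noncomputable def Phi (u : ℝ) : ℝ :=
  ∑' n : ℕ, (2 * Real.pi ^ 2 * (n + 1 : ℝ) ^ 4 * Real.exp (9 * u)
      - 3 * Real.pi * (n + 1 : ℝ) ^ 2 * Real.exp (5 * u))
    * Real.exp (-Real.pi * (n + 1 : ℝ) ^ 2 * Real.exp (4 * u))

namespace PhiAux

noncomputable def Eser (m : ℕ) (a : ℝ) : ℝ :=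
  ∑' n : ℤ, ((n : ℝ) ^ 2) ^ m * Real.exp (-π * a * (n : ℝ) ^ 2)

lemma summable_natE (m : ℕ) {a : ℝ} (ha : 0 < a) :
    Summable (fun n : ℕ => ((n : ℝ) ^ 2) ^ m * Real.exp (-π * a * (n : ℝ) ^ 2)) := by
  have hr : ‖Real.exp (-(π * a))‖ < 1 := by
    rw [Real.norm_eq_abs, Real.abs_exp, Real.exp_lt_one_iff]
    nlinarith [Real.pi_pos]
  refine Summable.of_nonneg_of_le (fun n => by positivity) (fun n => ?_)
    (summable_pow_mul_geometric_of_norm_lt_one (2 * m) hr)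
  have h1 : ((n : ℝ) ^ 2) ^ m = (n : ℝ) ^ (2 * m) := by rw [← pow_mul]
  have hn : (n : ℝ) ≤ (n : ℝ) ^ 2 := by
    rcases Nat.eq_zero_or_pos n with h | h
    · simp [h]
    · have : (1 : ℝ) ≤ n := by exact_mod_cast h
      nlinarith
  have h2 : Real.exp (-π * a * (n : ℝ) ^ 2) ≤ Real.exp (-(π * a)) ^ n := by
    rw [← Real.exp_nat_mul, Real.exp_le_exp]
    have hπa : 0 < π * a := by positivity
    nlinarith
  rw [h1]
  exact mul_le_mul_of_nonneg_left h2 (by positivity)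

lemma summable_intE (m : ℕ) {a : ℝ} (ha : 0 < a) :
    Summable (fun n : ℤ => ((n : ℝ) ^ 2) ^ m * Real.exp (-π * a * (n : ℝ) ^ 2)) := by
  refine Summable.of_nat_of_neg ?_ ?_ <;> simpa using summable_natE m ha

lemma hasDerivAt_Eser (m : ℕ) {t : ℝ} (ht : 0 < t) :
    HasDerivAt (Eser m) (-π * Eser (m + 1) t) t := by
  have ht2 : 0 < t / 2 := by linarith
  have key := hasDerivAt_tsum_of_isPreconnected
    (u := fun n : ℤ => π * ((n : ℝ) ^ 2) ^ (m + 1) * Real.exp (-π * (t / 2) * (n : ℝ) ^ 2))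
    (g := fun (n : ℤ) (a : ℝ) => ((n : ℝ) ^ 2) ^ m * Real.exp (-π * a * (n : ℝ) ^ 2))
    (g' := fun (n : ℤ) (a : ℝ) =>
      -π * ((n : ℝ) ^ 2) ^ (m + 1) * Real.exp (-π * a * (n : ℝ) ^ 2))
    (t := Set.Ioi (t / 2)) (y₀ := t) (y := t)
    ?_ isOpen_Ioi isPreconnected_Ioi ?_ ?_ (by simpa using ht2) (summable_intE m ht)
    (by simpa using ht2)
  · have : Eser m = fun a => ∑' n : ℤ, ((n : ℝ) ^ 2) ^ m * Real.exp (-π * a * (n : ℝ) ^ 2) :=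
      rfl
    rw [this]
    refine key.congr_deriv ?_
    rw [Eser, ← tsum_mul_left]
    exact tsum_congr fun n => by ring
  · simpa [mul_assoc] using (summable_intE (m + 1) ht2).mul_left π
  · intro n a _
    have h1 : HasDerivAt (fun a : ℝ => -π * a * (n : ℝ) ^ 2) (-π * (n : ℝ) ^ 2) a := by
      simpa using ((hasDerivAt_id a).const_mul (-π)).mul_const ((n : ℝ) ^ 2)
    have h2 := (h1.exp).const_mul (((n : ℝ) ^ 2) ^ m)
    refine h2.congr_deriv ?_
    ring
  · intro n a ha
    rw [Set.mem_Ioi] at ha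
    have hexp : Real.exp (-π * a * (n : ℝ) ^ 2) ≤ Real.exp (-π * (t / 2) * (n : ℝ) ^ 2) := by
      rw [Real.exp_le_exp]
      have := mul_nonneg (mul_nonneg Real.pi_pos.le (by linarith : (0:ℝ) ≤ a - t / 2))
        (sq_nonneg (n : ℝ))
      nlinarith
    have hnorm : ‖-π * ((n : ℝ) ^ 2) ^ (m + 1) * Real.exp (-π * a * (n : ℝ) ^ 2)‖
        = π * ((n : ℝ) ^ 2) ^ (m + 1) * Real.exp (-π * a * (n : ℝ) ^ 2) := by
      rw [Real.norm_eq_abs, abs_mul, abs_mul, Real.abs_exp, abs_neg,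
        abs_of_pos Real.pi_pos, abs_of_nonneg (by positivity : (0:ℝ) ≤ ((n : ℝ) ^ 2) ^ (m + 1))]
    rw [hnorm]
    exact mul_le_mul_of_nonneg_left hexp (by positivity)

lemma Eser0_eq {a : ℝ} (ha : 0 < a) :
    Eser 0 a = a ^ (-(1/2) : ℝ) * Eser 0 a⁻¹ := by
  have h := Real.tsum_exp_neg_mul_int_sq ha
  have e1 : Eser 0 a = ∑' n : ℤ, Real.exp (-π * a * (n : ℝ) ^ 2) :=
    tsum_congr fun n => by simp
  have e2 : Eser 0 a⁻¹ = ∑' n : ℤ, Real.exp (-π / a * (n : ℝ) ^ 2) :=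
    tsum_congr fun n => by rw [div_eq_mul_inv]; simp
  rw [e1, e2, h, Real.rpow_neg ha.le, one_div]

lemma rpow_mul_inv_sq {t : ℝ} (ht : 0 < t) (p : ℝ) :
    t ^ p * (t ^ 2)⁻¹ = t ^ (p - 2) := by
  rw [show ((t:ℝ) ^ 2) = t ^ ((2:ℕ):ℝ) from (Real.rpow_natCast t 2).symm,
    ← Real.rpow_neg ht.le, ← Real.rpow_add ht]
  norm_num
  ring_nf

lemma id1 {t : ℝ} (ht : 0 < t) :
    -π * Eser 1 t =
      -(1/2) * t ^ (-(3/2) : ℝ) * Eser 0 t⁻¹ + π * t ^ (-(5/2) : ℝ) * Eser 1 t⁻¹ := by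
  have hinv : HasDerivAt (fun a : ℝ => a⁻¹) (-(t ^ 2)⁻¹) t := hasDerivAt_inv ht.ne'
  have hE0inv : HasDerivAt (fun a : ℝ => Eser 0 a⁻¹)
      ((-π * Eser 1 t⁻¹) * (-(t ^ 2)⁻¹)) t :=
    (hasDerivAt_Eser 0 (inv_pos.2 ht)).comp t hinv
  have hp : HasDerivAt (fun a : ℝ => a ^ (-(1/2) : ℝ))
      ((-(1/2)) * t ^ ((-(1/2) : ℝ) - 1)) t :=
    Real.hasDerivAt_rpow_const (Or.inl ht.ne')
  have hR := hp.mul hE0inv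
  have hev : (fun a : ℝ => a ^ (-(1/2) : ℝ) * Eser 0 a⁻¹) =ᶠ[nhds t] Eser 0 :=
    Filter.eventuallyEq_of_mem (isOpen_Ioi.mem_nhds ht) fun a ha => (Eser0_eq ha).symm
  have hL : HasDerivAt (Eser 0)
      ((-(1/2)) * t ^ ((-(1/2) : ℝ) - 1) * Eser 0 t⁻¹
        + t ^ (-(1/2) : ℝ) * ((-π * Eser 1 t⁻¹) * (-(t ^ 2)⁻¹))) t :=
    hR.congr_of_eventuallyEq hev.symm
  have heq := (hasDerivAt_Eser 0 ht).unique hL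
  have h32 : ((-(1/2) : ℝ) - 1) = (-(3/2) : ℝ) := by norm_num
  have h52 := rpow_mul_inv_sq ht (-(1/2))
  have h52' : (-(1/2) : ℝ) - 2 = (-(5/2) : ℝ) := by norm_num
  rw [h52'] at h52
  rw [h32] at heq
  rw [heq]
  linear_combination (π * Eser 1 t⁻¹) * h52

lemma id2 {t : ℝ} (ht : 0 < t) :
    π ^ 2 * Eser 2 t =
      (3/4) * t ^ (-(5/2) : ℝ) * Eser 0 t⁻¹ - 3 * π * t ^ (-(7/2) : ℝ) * Eser 1 t⁻¹
        + π ^ 2 * t ^ (-(9/2) : ℝ) * Eser 2 t⁻¹ := by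
  have hinv : HasDerivAt (fun a : ℝ => a⁻¹) (-(t ^ 2)⁻¹) t := hasDerivAt_inv ht.ne'
  have hE0inv : HasDerivAt (fun a : ℝ => Eser 0 a⁻¹)
      ((-π * Eser 1 t⁻¹) * (-(t ^ 2)⁻¹)) t :=
    (hasDerivAt_Eser 0 (inv_pos.2 ht)).comp t hinv
  have hE1inv : HasDerivAt (fun a : ℝ => Eser 1 a⁻¹)
      ((-π * Eser 2 t⁻¹) * (-(t ^ 2)⁻¹)) t :=
    (hasDerivAt_Eser 1 (inv_pos.2 ht)).comp t hinv
  have hp3 : HasDerivAt (fun a : ℝ => a ^ (-(3/2) : ℝ))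
      ((-(3/2)) * t ^ ((-(3/2) : ℝ) - 1)) t :=
    Real.hasDerivAt_rpow_const (Or.inl ht.ne')
  have hp5 : HasDerivAt (fun a : ℝ => a ^ (-(5/2) : ℝ))
      ((-(5/2)) * t ^ ((-(5/2) : ℝ) - 1)) t :=
    Real.hasDerivAt_rpow_const (Or.inl ht.ne')
  have h1 := (hp3.mul hE0inv).const_mul (-(1/2) : ℝ)
  have h2 := (hp5.mul hE1inv).const_mul (π : ℝ)
  have hR2 := h1.add h2
  have hev : (fun a : ℝ => -(1/2) * (a ^ (-(3/2) : ℝ) * Eser 0 a⁻¹)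
      + π * (a ^ (-(5/2) : ℝ) * Eser 1 a⁻¹)) =ᶠ[nhds t] (fun a => -π * Eser 1 a) :=
    Filter.eventuallyEq_of_mem (isOpen_Ioi.mem_nhds ht) fun a ha => by
      have := id1 ha; rw [this]; ring
  have hL := hR2.congr_of_eventuallyEq hev.symm
  have heq := ((hasDerivAt_Eser 1 ht).const_mul (-π : ℝ)).unique hL
  have e52 : ((-(3/2) : ℝ) - 1) = (-(5/2) : ℝ) := by norm_num
  have e72 : ((-(5/2) : ℝ) - 1) = (-(7/2) : ℝ) := by norm_num
  rw [e52, e72] at heq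
  have h72 := rpow_mul_inv_sq ht (-(3/2))
  have h92 := rpow_mul_inv_sq ht (-(5/2))
  rw [show ((-(3/2) : ℝ) - 2) = (-(7/2) : ℝ) by norm_num] at h72
  rw [show ((-(5/2) : ℝ) - 2) = (-(9/2) : ℝ) by norm_num] at h92
  linear_combination heq - (π/2) * Eser 1 t⁻¹ * h72 + π ^ 2 * Eser 2 t⁻¹ * h92

lemma summable_shiftE (m : ℕ) {a : ℝ} (ha : 0 < a) :
    Summable (fun n : ℕ => (((n : ℝ) + 1) ^ 2) ^ m * Real.exp (-π * a * ((n : ℝ) + 1) ^ 2)) := by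
  have h := (summable_nat_add_iff 1).2 (summable_natE m ha)
  refine h.congr fun n => ?_
  push_cast
  norm_num

lemma Eser_nat (m : ℕ) (hm : m ≠ 0) {a : ℝ} (ha : 0 < a) :
    Eser m a = 2 * ∑' n : ℕ, (((n : ℝ) + 1) ^ 2) ^ m * Real.exp (-π * a * ((n : ℝ) + 1) ^ 2) := by
  have h1 : Summable (fun n : ℕ =>
      (((n : ℤ) : ℝ) ^ 2) ^ m * Real.exp (-π * a * ((n : ℤ) : ℝ) ^ 2)) := by
    refine (summable_natE m ha).congr fun n => by push_cast; ring_nf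
  have h2 : Summable (fun n : ℕ =>
      (((-(n + 1) : ℤ) : ℝ) ^ 2) ^ m * Real.exp (-π * a * ((-(n + 1) : ℤ) : ℝ) ^ 2)) := by
    refine (summable_shiftE m ha).congr fun n => by push_cast; ring_nf
  rw [Eser, tsum_of_nat_of_neg_add_one h1 h2]
  have e1 : ∑' n : ℕ, (((n : ℤ) : ℝ) ^ 2) ^ m * Real.exp (-π * a * ((n : ℤ) : ℝ) ^ 2)
      = ∑' n : ℕ, (((n : ℝ) + 1) ^ 2) ^ m * Real.exp (-π * a * ((n : ℝ) + 1) ^ 2) := by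
    rw [Summable.tsum_eq_zero_add h1]
    norm_num [zero_pow hm]
  have e2 : ∑' n : ℕ, (((-(n + 1) : ℤ) : ℝ) ^ 2) ^ m * Real.exp (-π * a * ((-(n + 1) : ℤ) : ℝ) ^ 2)
      = ∑' n : ℕ, (((n : ℝ) + 1) ^ 2) ^ m * Real.exp (-π * a * ((n : ℝ) + 1) ^ 2) :=
    tsum_congr fun n => by push_cast; ring_nf
  rw [e1, e2]
  ring

lemma Phi_eq (u : ℝ) :
    Phi u = π ^ 2 * Real.exp (9 * u) * Eser 2 (Real.exp (4 * u))
      - (3 / 2) * π * Real.exp (5 * u) * Eser 1 (Real.exp (4 * u)) := by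
  have ha : 0 < Real.exp (4 * u) := Real.exp_pos _
  have hs1 := summable_shiftE 1 ha
  have hs2 := summable_shiftE 2 ha
  have hterm : ∀ n : ℕ,
      (2 * Real.pi ^ 2 * (n + 1 : ℝ) ^ 4 * Real.exp (9 * u)
        - 3 * Real.pi * (n + 1 : ℝ) ^ 2 * Real.exp (5 * u))
      * Real.exp (-Real.pi * (n + 1 : ℝ) ^ 2 * Real.exp (4 * u))
      = 2 * π ^ 2 * Real.exp (9 * u)
          * ((((n : ℝ) + 1) ^ 2) ^ 2 * Real.exp (-π * Real.exp (4 * u) * ((n : ℝ) + 1) ^ 2))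
        - 3 * π * Real.exp (5 * u)
          * ((((n : ℝ) + 1) ^ 2) ^ 1 * Real.exp (-π * Real.exp (4 * u) * ((n : ℝ) + 1) ^ 2)) := by
    intro n
    rw [show -Real.pi * (n + 1 : ℝ) ^ 2 * Real.exp (4 * u)
      = -π * Real.exp (4 * u) * ((n : ℝ) + 1) ^ 2 by ring]
    ring
  rw [Phi, tsum_congr hterm,
    Summable.tsum_sub (hs2.mul_left _) (hs1.mul_left _), tsum_mul_left, tsum_mul_left,
    Eser_nat 1 one_ne_zero ha, Eser_nat 2 two_ne_zero ha]
  ring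

end PhiAux

open PhiAux in
/-- The series defining `Φ` converges absolutely for every real `u`, and `Φ` is even. -/
theorem Phi_summable_and_even (u : ℝ) :
    Summable (fun n : ℕ =>
      |(2 * Real.pi ^ 2 * (n + 1 : ℝ) ^ 4 * Real.exp (9 * u)
          - 3 * Real.pi * (n + 1 : ℝ) ^ 2 * Real.exp (5 * u))
        * Real.exp (-Real.pi * (n + 1 : ℝ) ^ 2 * Real.exp (4 * u))|)
    ∧ Phi (-u) = Phi u := by
  constructor
  · have ha : 0 < Real.exp (4 * u) := Real.exp_pos _
    have hs1 := (summable_shiftE 1 ha).mul_left (3 * π * Real.exp (5 * u))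
    have hs2 := (summable_shiftE 2 ha).mul_left (2 * π ^ 2 * Real.exp (9 * u))
    refine Summable.of_nonneg_of_le (fun n => abs_nonneg _) (fun n => ?_) (hs2.add hs1)
    rw [abs_mul, Real.abs_exp]
    have habs : |2 * Real.pi ^ 2 * (n + 1 : ℝ) ^ 4 * Real.exp (9 * u)
        - 3 * Real.pi * (n + 1 : ℝ) ^ 2 * Real.exp (5 * u)|
        ≤ 2 * Real.pi ^ 2 * (n + 1 : ℝ) ^ 4 * Real.exp (9 * u)
          + 3 * Real.pi * (n + 1 : ℝ) ^ 2 * Real.exp (5 * u) := by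
      refine (abs_sub _ _).trans ?_
      rw [abs_of_nonneg (by positivity), abs_of_nonneg (by positivity)]
    calc |2 * Real.pi ^ 2 * (n + 1 : ℝ) ^ 4 * Real.exp (9 * u)
          - 3 * Real.pi * (n + 1 : ℝ) ^ 2 * Real.exp (5 * u)|
          * Real.exp (-Real.pi * (n + 1 : ℝ) ^ 2 * Real.exp (4 * u))
        ≤ (2 * Real.pi ^ 2 * (n + 1 : ℝ) ^ 4 * Real.exp (9 * u)
            + 3 * Real.pi * (n + 1 : ℝ) ^ 2 * Real.exp (5 * u))
          * Real.exp (-Real.pi * (n + 1 : ℝ) ^ 2 * Real.exp (4 * u)) :=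
        mul_le_mul_of_nonneg_right habs (Real.exp_pos _).le
      _ = 2 * π ^ 2 * Real.exp (9 * u)
            * ((((n : ℝ) + 1) ^ 2) ^ 2 * Real.exp (-π * Real.exp (4 * u) * ((n : ℝ) + 1) ^ 2))
          + 3 * π * Real.exp (5 * u)
            * ((((n : ℝ) + 1) ^ 2) ^ 1 * Real.exp (-π * Real.exp (4 * u) * ((n : ℝ) + 1) ^ 2)) := by
        rw [show -Real.pi * (n + 1 : ℝ) ^ 2 * Real.exp (4 * u)
          = -π * Real.exp (4 * u) * ((n : ℝ) + 1) ^ 2 by ring]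
        ring
  · rw [Phi_eq, Phi_eq]
    set x := Real.exp u with hxdef
    have hx0 : x ≠ 0 := (Real.exp_pos u).ne'
    have hpow : ∀ k : ℕ, Real.exp ((k : ℝ) * u) = x ^ k := fun k => Real.exp_nat_mul u k
    have hneg : ∀ k : ℕ, Real.exp (-((k : ℝ) * u)) = (x ^ k)⁻¹ := fun k => by
      rw [Real.exp_neg, hpow]
    have h4 : Real.exp (4 * -u) = (Real.exp (4 * u))⁻¹ := by
      rw [show (4 : ℝ) * -u = -(4 * u) by ring, Real.exp_neg]
    have ht : (0 : ℝ) < Real.exp (4 * u) := Real.exp_pos _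
    have hrpow : ∀ k : ℕ, Real.exp (4 * u) ^ (-((k : ℝ) / 2)) = (x ^ (2 * k))⁻¹ := fun k => by
      rw [← Real.exp_mul, show (4 * u) * (-((k : ℝ) / 2)) = -(((2 * k : ℕ) : ℝ) * u) by
        push_cast; ring, hneg]
    have hid1 := id1 ht
    have hid2 := id2 ht
    rw [show (-(3/2) : ℝ) = -((3 : ℕ) / 2) by norm_num, hrpow 3,
      show (-(5/2) : ℝ) = -((5 : ℕ) / 2) by norm_num, hrpow 5] at hid1
    rw [show (-(5/2) : ℝ) = -((5 : ℕ) / 2) by norm_num, hrpow 5,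
      show (-(7/2) : ℝ) = -((7 : ℕ) / 2) by norm_num, hrpow 7,
      show (-(9/2) : ℝ) = -((9 : ℕ) / 2) by norm_num, hrpow 9] at hid2
    rw [h4, show (9 : ℝ) * -u = -(((9 : ℕ) : ℝ) * u) by push_cast; ring, hneg,
      show (5 : ℝ) * -u = -(((5 : ℕ) : ℝ) * u) by push_cast; ring, hneg,
      show (9 : ℝ) * u = ((9 : ℕ) : ℝ) * u by push_cast; ring, hpow,
      show (5 : ℝ) * u = ((5 : ℕ) : ℝ) * u by push_cast; ring, hpow]
    set a := Eser 0 (Real.exp (4 * u))⁻¹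
    set b := Eser 1 (Real.exp (4 * u))
    set b' := Eser 1 (Real.exp (4 * u))⁻¹
    set c := Eser 2 (Real.exp (4 * u))
    set c' := Eser 2 (Real.exp (4 * u))⁻¹
    have i5 : x ^ 5 * (x ^ 5)⁻¹ = 1 := mul_inv_cancel₀ (pow_ne_zero _ hx0)
    have i6 : x ^ 6 * (x ^ 6)⁻¹ = 1 := mul_inv_cancel₀ (pow_ne_zero _ hx0)
    have i9 : x ^ 9 * (x ^ 9)⁻¹ = 1 := mul_inv_cancel₀ (pow_ne_zero _ hx0)
    have i10 : x ^ 10 * (x ^ 10)⁻¹ = 1 := mul_inv_cancel₀ (pow_ne_zero _ hx0)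
    have i14 : x ^ 14 * (x ^ 14)⁻¹ = 1 := mul_inv_cancel₀ (pow_ne_zero _ hx0)
    have i18 : x ^ 18 * (x ^ 18)⁻¹ = 1 := mul_inv_cancel₀ (pow_ne_zero _ hx0)
    have hid1' : x ^ 10 * (-π * b) = -(1/2) * x ^ 4 * a + π * b' := by
      linear_combination x ^ 10 * hid1 - (1/2) * a * x ^ 4 * i6 + π * b' * i10
    have hid2' : x ^ 18 * (π ^ 2 * c) = (3/4) * x ^ 8 * a - 3 * π * x ^ 4 * b' + π ^ 2 * c' := by
      linear_combination x ^ 18 * hid2 + (3/4) * a * x ^ 8 * i10 - 3 * π * b' * x ^ 4 * i14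
        + π ^ 2 * c' * i18
    apply mul_left_cancel₀ (pow_ne_zero 9 hx0)
    linear_combination -hid2' - (3/2) * x ^ 4 * hid1' + π ^ 2 * c' * i9
      - (3/2) * π * b' * x ^ 4 * i5
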